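/- arXiv:2110.08348 — 3 statements merged into one kernel-verified Lean document; each statement's English description precedes it below -/
import Mathlib

section
/- Under Assumptions 0 and 1, the function q ↦ ℓ(q) is strictly concave on S°, i.e. for all q₀, q₁ ∈ S° with q₀ ≠ q₁ and all t ∈ (0,1), ℓ(t·q₀ + (1−t)·q₁) > t·ℓ(q₀) + (1−t)·ℓ(q₁). -/
/-!
On `S°` every mixture `⟨q, p_{·im}⟩` with `x_{im} > 0` is positive (Assumption 0), so `ℓ` is the
real-valued sum `Σ x_{im} log⟨q, p_{·im}⟩ / (2M)`. Each summand is concave along segments since `log`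
is concave and `q ↦ ⟨q, p_{·im}⟩` is linear. For `q₀ ≠ q₁` in `S`, Assumption 1 applied to
`s = q₀ - q₁` yields a summand whose two mixtures differ, where strict concavity of `log` makes the
inequality strict.
-/

open scoped BigOperators

/-- Membership in the simplex `S = {q : q_k ≥ 0, Σ_k q_k = 1}`. -/
def memS {K : ℕ} (q : Fin K → ℝ) : Prop :=
  (∀ k, 0 ≤ q k) ∧ ∑ k, q k = 1

/-- Membership in the relative interior `S° = {q ∈ S : q_k > 0 for all k}`. -/
def memSInt {K : ℕ} (q : Fin K → ℝ) : Prop :=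
  (∀ k, 0 < q k) ∧ ∑ k, q k = 1

/-- The (normalized) log-likelihood of the admixture model, with values in the
extended reals, using the convention `x · log 0 = −∞` for `x > 0` (and the term
is `0` when `x = 0`). -/
noncomputable def ell {K I M : ℕ} (p : Fin K → Fin I → Fin M → ℝ)
    (x : Fin I → Fin M → ℕ) (q : Fin K → ℝ) : EReal :=
  ((1 / (2 * (M : ℝ)) : ℝ) : EReal) *
    ∑ m : Fin M, ∑ i : Fin I,
      (if x i m = 0 then (0 : EReal)
       else if (∑ k : Fin K, q k * p k i m) ≤ 0 then (⊥ : EReal)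
       else (((x i m : ℝ) * Real.log (∑ k : Fin K, q k * p k i m) : ℝ) : EReal))

open Finset Real

theorem EReal.coe_finset_sum {α : Type*} (s : Finset α) (f : α → ℝ) :
    ((∑ a ∈ s, f a : ℝ) : EReal) = ∑ a ∈ s, (f a : EReal) :=
  map_sum (⟨⟨Real.toEReal, EReal.coe_zero⟩, EReal.coe_add⟩ : ℝ →+ EReal) f s

theorem mul_log_combination_le {a b c t : ℝ} (ha : 0 < a) (hb : 0 < b) (hc : 0 ≤ c)
    (ht0 : 0 ≤ t) (ht1 : t ≤ 1) :
    t * (c * log a) + (1 - t) * (c * log b) ≤ c * log (t * a + (1 - t) * b) := by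
  have hlog : t * log a + (1 - t) * log b ≤ log (t * a + (1 - t) * b) :=
    strictConcaveOn_log_Ioi.concaveOn.2 ha hb ht0 (by linarith) (by ring)
  linarith [mul_le_mul_of_nonneg_left hlog hc]

theorem mul_log_combination_lt {a b c t : ℝ} (ha : 0 < a) (hb : 0 < b) (hab : a ≠ b)
    (hc : 0 < c) (ht0 : 0 < t) (ht1 : t < 1) :
    t * (c * log a) + (1 - t) * (c * log b) < c * log (t * a + (1 - t) * b) := by
  have hlog : t * log a + (1 - t) * log b < log (t * a + (1 - t) * b) :=
    strictConcaveOn_log_Ioi.2 ha hb hab ht0 (by linarith) (by ring)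
  linarith [mul_lt_mul_of_pos_left hlog hc]

theorem sum_mul_pos_of_exists_pos {κ : Type*} [Fintype κ] {q p : κ → ℝ} (hq : ∀ k, 0 < q k)
    (hp : ∀ k, 0 ≤ p k) (h : ∃ k, 0 < p k) : 0 < ∑ k, q k * p k := by
  obtain ⟨k, hk⟩ := h
  exact sum_pos' (fun j _ => mul_nonneg (hq j).le (hp j)) ⟨k, mem_univ k, mul_pos (hq k) hk⟩

theorem sum_combination_mul {κ : Type*} [Fintype κ] (q₀ q₁ p : κ → ℝ) (t : ℝ) :
    ∑ k, (t * q₀ k + (1 - t) * q₁ k) * p k = t * ∑ k, q₀ k * p k + (1 - t) * ∑ k, q₁ k * p k := by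
  simp only [add_mul, mul_assoc, sum_add_distrib, ← mul_sum]

section LogLikelihood

variable {κ ι μ : Type*} [Fintype κ] [Fintype ι] [Fintype μ]

noncomputable def logLik (p : κ → ι → μ → ℝ) (x : ι → μ → ℕ) (q : κ → ℝ) : ℝ :=
  ∑ m, ∑ i, (x i m : ℝ) * log (∑ k, q k * p k i m)

theorem logLik_combination_lt {p : κ → ι → μ → ℝ} {x : ι → μ → ℕ} {q₀ q₁ : κ → ℝ} {t : ℝ}
    (h₀ : ∀ i m, x i m ≠ 0 → 0 < ∑ k, q₀ k * p k i m)
    (h₁ : ∀ i m, x i m ≠ 0 → 0 < ∑ k, q₁ k * p k i m)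
    (ht0 : 0 < t) (ht1 : t < 1) {i₀ : ι} {m₀ : μ} (hx : x i₀ m₀ ≠ 0)
    (hne : ∑ k, q₀ k * p k i₀ m₀ ≠ ∑ k, q₁ k * p k i₀ m₀) :
    t * logLik p x q₀ + (1 - t) * logLik p x q₁ <
      logLik p x (fun k => t * q₀ k + (1 - t) * q₁ k) := by
  have hle : ∀ i m, t * ((x i m : ℝ) * log (∑ k, q₀ k * p k i m)) +
      (1 - t) * ((x i m : ℝ) * log (∑ k, q₁ k * p k i m)) ≤
      (x i m : ℝ) * log (∑ k, (t * q₀ k + (1 - t) * q₁ k) * p k i m) := by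
    intro i m
    rw [sum_combination_mul]
    by_cases hxim : x i m = 0
    · simp [hxim]
    · exact mul_log_combination_le (h₀ i m hxim) (h₁ i m hxim) (Nat.cast_nonneg _) ht0.le ht1.le
  have hlt : t * ((x i₀ m₀ : ℝ) * log (∑ k, q₀ k * p k i₀ m₀)) +
      (1 - t) * ((x i₀ m₀ : ℝ) * log (∑ k, q₁ k * p k i₀ m₀)) <
      (x i₀ m₀ : ℝ) * log (∑ k, (t * q₀ k + (1 - t) * q₁ k) * p k i₀ m₀) := by
    rw [sum_combination_mul]
    exact mul_log_combination_lt (h₀ i₀ m₀ hx) (h₁ i₀ m₀ hx) hne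
      (Nat.cast_pos.2 (Nat.pos_of_ne_zero hx)) ht0 ht1
  have hsum := sum_lt_sum (fun m _ => sum_le_sum fun i _ => hle i m)
    ⟨m₀, mem_univ m₀, sum_lt_sum (fun i _ => hle i m₀) ⟨i₀, mem_univ i₀, hlt⟩⟩
  simpa only [logLik, mul_sum, sum_add_distrib] using hsum

end LogLikelihood

theorem ell_eq_coe_logLik {K I M : ℕ} {p : Fin K → Fin I → Fin M → ℝ} {x : Fin I → Fin M → ℕ}
    {q : Fin K → ℝ} (hpos : ∀ i m, x i m ≠ 0 → 0 < ∑ k, q k * p k i m) :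
    ell p x q = ((1 / (2 * (M : ℝ)) * logLik p x q : ℝ) : EReal) := by
  have hterm : ∀ m i,
      (if x i m = 0 then (0 : EReal)
       else if (∑ k, q k * p k i m) ≤ 0 then (⊥ : EReal)
       else (((x i m : ℝ) * log (∑ k, q k * p k i m) : ℝ) : EReal)) =
      (((x i m : ℝ) * log (∑ k, q k * p k i m) : ℝ) : EReal) := by
    intro m i
    by_cases hxim : x i m = 0
    · simp [hxim]
    · simp [hxim, not_le.2 (hpos i m hxim)]
  rw [ell, EReal.coe_mul, logLik, EReal.coe_finset_sum]
  simp only [hterm, EReal.coe_finset_sum]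

theorem ell_strictConcave_on_interior_general
    (K I M : ℕ)
    (p : Fin K → Fin I → Fin M → ℝ)
    (hp0 : ∀ k i m, 0 ≤ p k i m)
    (x : Fin I → Fin M → ℕ)
    (hA0 : ∀ i m, 0 < x i m → ∃ k, 0 < p k i m)
    (hA1 : ∀ s : Fin K → ℝ, s ≠ 0 → ∑ k, s k = 0 →
      ∃ i m, 0 < x i m ∧ ∑ k, s k * p k i m ≠ 0)
    (q₀ q₁ : Fin K → ℝ) (hq₀ : memSInt q₀) (hq₁ : memSInt q₁) (hne : q₀ ≠ q₁)
    (t : ℝ) (ht0 : 0 < t) (ht1 : t < 1) :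
    (t : EReal) * ell p x q₀ + ((1 - t : ℝ) : EReal) * ell p x q₁ <
      ell p x (fun k => t * q₀ k + (1 - t) * q₁ k) := by
  have hpos : ∀ q, memSInt q → ∀ i m, x i m ≠ 0 → 0 < ∑ k, q k * p k i m :=
    fun q hq i m hx => sum_mul_pos_of_exists_pos hq.1 (hp0 · i m) (hA0 i m (Nat.pos_of_ne_zero hx))
  have hpos_t : ∀ i m, x i m ≠ 0 → 0 < ∑ k, (t * q₀ k + (1 - t) * q₁ k) * p k i m := by
    intro i m hx
    rw [sum_combination_mul]
    have := hpos q₀ hq₀ i m hx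
    have := hpos q₁ hq₁ i m hx
    have : 0 < 1 - t := by linarith
    positivity
  obtain ⟨i₀, m₀, hx, hdiff⟩ := hA1 (q₀ - q₁) (sub_ne_zero.2 hne)
    (by simp [sum_sub_distrib, hq₀.2, hq₁.2])
  have hmix_ne : ∑ k, q₀ k * p k i₀ m₀ ≠ ∑ k, q₁ k * p k i₀ m₀ := by
    simpa only [Pi.sub_apply, sub_mul, sum_sub_distrib, sub_ne_zero] using hdiff
  have hlt := logLik_combination_lt (hpos q₀ hq₀) (hpos q₁ hq₁) ht0 ht1 hx.ne' hmix_ne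
  have hc : 0 < 1 / (2 * (M : ℝ)) := by
    have : (0 : ℝ) < M := Nat.cast_pos.2 m₀.pos
    positivity
  rw [ell_eq_coe_logLik (hpos q₀ hq₀), ell_eq_coe_logLik (hpos q₁ hq₁), ell_eq_coe_logLik hpos_t]
  rw [← EReal.coe_mul, ← EReal.coe_mul, ← EReal.coe_add, EReal.coe_lt_coe_iff]
  linarith [mul_lt_mul_of_pos_left hlt hc]

/-- Under Assumptions 0 and 1, the log-likelihood `q ↦ ℓ(q)` is
strictly concave on `S°`. -/
theorem ell_strictConcave_on_interior
    (K I M : ℕ) (hK : 2 ≤ K) (hI : 2 ≤ I) (hM : 1 ≤ M)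
    (p : Fin K → Fin I → Fin M → ℝ)
    (hp0 : ∀ k i m, 0 ≤ p k i m)
    (hp1 : ∀ k m, ∑ i, p k i m = 1)
    (x : Fin I → Fin M → ℕ)
    (hx2 : ∀ i m, x i m ≤ 2)
    (hxsum : ∀ m, ∑ i, x i m = 2)
    (hA0 : ∀ i m, 0 < x i m → ∃ k, 0 < p k i m)
    (hA1 : ∀ s : Fin K → ℝ, s ≠ 0 → ∑ k, s k = 0 →
      ∃ i m, 0 < x i m ∧ ∑ k, s k * p k i m ≠ 0)
    (q₀ q₁ : Fin K → ℝ) (hq₀ : memSInt q₀) (hq₁ : memSInt q₁) (hne : q₀ ≠ q₁)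
    (t : ℝ) (ht0 : 0 < t) (ht1 : t < 1) :
    (t : EReal) * ell p x q₀ + ((1 - t : ℝ) : EReal) * ell p x q₁ <
      ell p x (fun k => t * q₀ k + (1 - t) * q₁ k) :=
  ell_strictConcave_on_interior_general K I M p hp0 x hA0 hA1 q₀ q₁ hq₀ hq₁ hne t ht0 ht1
end

section
/- Let q ∈ ℝ^K satisfy ⟨q, p_{·im}⟩ > 0 for all i, m, and let A(q) := (1/M) Σ_{m=1}^M Σ_{i=1}^I (p_{·im} · p_{·im}ᵀ)/⟨q, p_{·im}⟩. Then (1/(4M²)) Σ_{m=1}^M Σ_{i=1}^I Σ_{j=1}^I [2⟨q, p_{·im}⟩(δ_{ij} − ⟨q, p_{·jm}⟩)/(⟨q, p_{·im}⟩·⟨q, p_{·jm}⟩)] · (p_{·im} · p_{·jm}ᵀ) = (1/(2M)) · (A(q) − 𝟙·𝟙ᵀ), where δ_{ij} is the Kronecker delta and 𝟙 ∈ ℝ^K is the all-ones vector. -/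
/-!
At a fixed marker write `s i = ⟨q, p_{·im}⟩ ≠ 0`. The multinomial coefficient simplifies to
`2 * s i * (δ i j - s j) / (s i * s j) = 2 * (δ i j / s j - 1)`, so the `δ` part leaves the diagonal
sum `2 * Σ_i p_{·im} p_{·im}ᵀ / s i`, while the constant part factors as
`-2 * (Σ_i p_{·im}) (Σ_j p_{·jm})ᵀ = -2 * 𝟙𝟙ᵀ` because the allele frequencies at a marker sum to one.
Summing the `M` markers and rescaling gives `(1/(2M)) (A(q) - 𝟙𝟙ᵀ)`.
-/

open scoped BigOperators

/-- The matrix `A(q) = (1/M) Σ_m Σ_i (p_{·im} p_{·im}ᵀ)/⟨q, p_{·im}⟩`. -/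
noncomputable def Amat {K I M : ℕ} (p : Fin K → Fin I → Fin M → ℝ)
    (q : Fin K → ℝ) : Matrix (Fin K) (Fin K) ℝ :=
  (1 / (M : ℝ)) •
    ∑ m : Fin M, ∑ i : Fin I,
      (∑ r : Fin K, q r * p r i m)⁻¹ •
        Matrix.vecMulVec (fun k => p k i m) (fun k => p k i m)

open Finset Matrix

section

variable {ι n R : Type*} [Fintype ι]

theorem Matrix.vecMulVec_sum_sum [CommSemiring R] (v w : ι → n → R) :
    vecMulVec (∑ i, v i) (∑ j, w j) = ∑ i, ∑ j, vecMulVec (v i) (w j) := by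
  ext k l
  simp only [vecMulVec_apply, Finset.sum_apply, Matrix.sum_apply, Finset.sum_mul_sum]

theorem Matrix.sum_sum_kronecker_sub_one_smul_vecMulVec [DecidableEq ι] [CommRing R]
    (c : ι → R) (v : ι → n → R) :
    ∑ i, ∑ j, ((if i = j then c j else 0) - 1) • vecMulVec (v i) (v j) =
      ∑ i, c i • vecMulVec (v i) (v i) - vecMulVec (∑ i, v i) (∑ i, v i) := by
  simp only [sub_smul, one_smul, Finset.sum_sub_distrib, ite_smul, zero_smul,
    Finset.sum_ite_eq, Finset.mem_univ, if_true, vecMulVec_sum_sum]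

end

theorem two_mul_mul_kronecker_sub_div {ι F : Type*} [DecidableEq ι] [Field F] {s : ι → F}
    {i j : ι} (hi : s i ≠ 0) (hj : s j ≠ 0) :
    2 * s i * ((if i = j then 1 else 0) - s j) / (s i * s j) =
      2 * ((if i = j then (s j)⁻¹ else 0) - 1) := by
  split_ifs
  · field_simp
  · field_simp; ring

theorem score_covariance_eq_general
    (K I M : ℕ) (hM : 1 ≤ M)
    (p : Fin K → Fin I → Fin M → ℝ)
    (hp1 : ∀ k m, ∑ i, p k i m = 1)
    (q : Fin K → ℝ)
    (hq : ∀ i m, 0 < ∑ r : Fin K, q r * p r i m) :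
    (1 / (4 * (M : ℝ) ^ 2)) •
      (∑ m : Fin M, ∑ i : Fin I, ∑ j : Fin I,
        ((2 * (∑ r : Fin K, q r * p r i m) *
            ((if i = j then (1 : ℝ) else 0) - ∑ r : Fin K, q r * p r j m)) /
          ((∑ r : Fin K, q r * p r i m) * (∑ r : Fin K, q r * p r j m))) •
          Matrix.vecMulVec (fun k => p k i m) (fun k => p k j m)) =
    (1 / (2 * (M : ℝ))) •
      (Amat p q - Matrix.vecMulVec (fun _ => (1 : ℝ)) (fun _ => (1 : ℝ))) := by
  have hcol : ∀ m, ∑ i, (fun k => p k i m) = fun _ => 1 :=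
    fun m => funext fun k => by rw [Finset.sum_apply, hp1]
  have hmarker : ∀ m, ∑ i : Fin I, ∑ j : Fin I,
      ((2 * (∑ r : Fin K, q r * p r i m) *
          ((if i = j then (1 : ℝ) else 0) - ∑ r : Fin K, q r * p r j m)) /
        ((∑ r : Fin K, q r * p r i m) * (∑ r : Fin K, q r * p r j m))) •
        vecMulVec (fun k => p k i m) (fun k => p k j m) =
      (2 : ℝ) • (∑ i : Fin I, (∑ r : Fin K, q r * p r i m)⁻¹ •
        vecMulVec (fun k => p k i m) (fun k => p k i m) -
        vecMulVec (fun _ => 1) (fun _ => 1)) := by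
    intro m
    rw [← hcol m, ← sum_sum_kronecker_sub_one_smul_vecMulVec, Finset.smul_sum]
    refine Finset.sum_congr rfl fun i _ => ?_
    rw [Finset.smul_sum]
    refine Finset.sum_congr rfl fun j _ => ?_
    rw [two_mul_mul_kronecker_sub_div (s := fun i => ∑ r, q r * p r i m) (hq i m).ne' (hq j m).ne',
      smul_smul]
  have hM0 : (M : ℝ) ≠ 0 := Nat.cast_ne_zero.mpr (by omega)
  rw [Finset.sum_congr rfl fun m _ => hmarker m, ← Finset.smul_sum, Finset.sum_sub_distrib,
    Finset.sum_const, Finset.card_univ, Fintype.card_fin, Amat]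
  match_scalars <;> field_simp <;> ring

/-- The covariance matrix of the score in the admixture model
equals `(1/(2M)) (A(q) − 𝟙·𝟙ᵀ)`. -/
theorem score_covariance_eq
    (K I M : ℕ) (hK : 2 ≤ K) (hI : 2 ≤ I) (hM : 1 ≤ M)
    (p : Fin K → Fin I → Fin M → ℝ)
    (hp0 : ∀ k i m, 0 ≤ p k i m)
    (hp1 : ∀ k m, ∑ i, p k i m = 1)
    (q : Fin K → ℝ)
    (hq : ∀ i m, 0 < ∑ r : Fin K, q r * p r i m) :
    (1 / (4 * (M : ℝ) ^ 2)) •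
      (∑ m : Fin M, ∑ i : Fin I, ∑ j : Fin I,
        ((2 * (∑ r : Fin K, q r * p r i m) *
            ((if i = j then (1 : ℝ) else 0) - ∑ r : Fin K, q r * p r j m)) /
          ((∑ r : Fin K, q r * p r i m) * (∑ r : Fin K, q r * p r j m))) •
          Matrix.vecMulVec (fun k => p k i m) (fun k => p k j m)) =
    (1 / (2 * (M : ℝ))) •
      (Amat p q - Matrix.vecMulVec (fun _ => (1 : ℝ)) (fun _ => (1 : ℝ))) :=
  score_covariance_eq_general K I M hM p hp1 q hq
end

section
/- Let q ∈ ℝ^K with q_k > 0 for all k, and let A be a symmetric positive definite K×K real matrix with nonnegative entries such that the matrix B := diag(q)·A satisfies 𝟙ᵀ·B = 𝟙ᵀ (every column of B sums to 1). Then every eigenvalue of B (over ℂ) is real and lies in the interval (0, 1]; consequently, every eigenvalue of E_K − B is real, lies in [0, 1), and in particular has absolute value strictly less than 1. -/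
/-!
If `diag(q) A v = μ v` with `v ≠ 0`, then `A v = μ diag(q)⁻¹ v`, so
`v* A v = μ · v* diag(q)⁻¹ v` with both Hermitian forms positive: `μ` is a positive real.
Nonnegative entries and unit column sums make `diag(q) A` a contraction for the `ℓ¹` norm,
so `|μ| ≤ 1`. The eigenvalues of `E_K − diag(q) A` are the numbers `1 − μ`.
-/

open Matrix
open scoped ComplexOrder

variable {n : Type*} [Fintype n]

theorem Matrix.re_star_dotProduct_map_ofReal_mulVec (A : Matrix n n ℝ) (v : n → ℂ) :
    (star v ⬝ᵥ (A.map (↑) *ᵥ v)).re =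
      (fun i ↦ (v i).re) ⬝ᵥ A *ᵥ (fun i ↦ (v i).re) +
        (fun i ↦ (v i).im) ⬝ᵥ A *ᵥ (fun i ↦ (v i).im) := by
  simp only [dotProduct, mulVec, Complex.re_sum, Finset.mul_sum, ← Finset.sum_add_distrib]
  refine Finset.sum_congr rfl fun i _ ↦ Finset.sum_congr rfl fun j _ ↦ ?_
  simp only [Pi.star_apply, map_apply, Complex.star_def, Complex.mul_re, Complex.mul_im,
    Complex.conj_re, Complex.conj_im, Complex.ofReal_re, Complex.ofReal_im]
  ring

theorem Matrix.PosDef.map_ofReal {A : Matrix n n ℝ} (hA : A.PosDef) :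
    (A.map ((↑) : ℝ → ℂ)).PosDef := by
  have hherm : (A.map ((↑) : ℝ → ℂ)).IsHermitian :=
    hA.isHermitian.map _ fun x ↦ (Complex.conj_ofReal x).symm
  refine .of_dotProduct_mulVec_pos hherm fun v hv ↦ Complex.pos_iff.mpr ⟨?_, ?_⟩
  · have hpos (s : n → ℝ) (hs : s ≠ 0) : 0 < s ⬝ᵥ A *ᵥ s := by
      simpa only [star_trivial] using hA.dotProduct_mulVec_pos hs
    have hnonneg (s : n → ℝ) : 0 ≤ s ⬝ᵥ A *ᵥ s := by
      simpa only [star_trivial] using hA.posSemidef.dotProduct_mulVec_nonneg s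
    rw [re_star_dotProduct_map_ofReal_mulVec]
    by_cases hre : (fun i ↦ (v i).re) = 0
    · have him : (fun i ↦ (v i).im) ≠ 0 := fun him ↦ hv <| funext fun i ↦
        Complex.ext (congrFun hre i) (congrFun him i)
      linarith [hnonneg fun i ↦ (v i).re, hpos _ him]
    · linarith [hnonneg fun i ↦ (v i).im, hpos _ hre]
  · exact (hherm.im_star_dotProduct_mulVec_self v).symm

variable {𝕜 : Type*} [RCLike 𝕜]

theorem Matrix.PosDef.pos_of_mulVec_eq_smul_mulVec {A B : Matrix n n 𝕜} (hA : A.PosDef)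
    (hB : B.PosDef) {μ : 𝕜} {v : n → 𝕜} (hv : v ≠ 0) (h : A *ᵥ v = μ • B *ᵥ v) :
    0 < μ := by
  have hAv := hA.dotProduct_mulVec_pos hv
  have hBv := hB.dotProduct_mulVec_pos hv
  rw [h, dotProduct_smul, smul_eq_mul] at hAv
  simpa [hBv.ne'] using div_pos hAv hBv

theorem Matrix.PosDef.pos_of_diagonal_mul_mulVec_eq_smul [DecidableEq n] {d : n → ℝ}
    (hd : ∀ i, 0 < d i) {A : Matrix n n 𝕜} (hA : A.PosDef) {μ : 𝕜} {v : n → 𝕜}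
    (hv : v ≠ 0) (h : (diagonal (fun i ↦ (d i : 𝕜)) * A) *ᵥ v = μ • v) : 0 < μ := by
  refine hA.pos_of_mulVec_eq_smul_mulVec (B := diagonal fun i ↦ ((d i)⁻¹ : 𝕜))
    (.diagonal fun i ↦ by simpa using hd i) hv ?_
  calc A *ᵥ v
      = diagonal (fun i ↦ ((d i)⁻¹ : 𝕜)) *ᵥ
          ((diagonal (fun i ↦ (d i : 𝕜)) * A) *ᵥ v) := by
        rw [mulVec_mulVec, ← mul_assoc, diagonal_mul_diagonal]
        simp [fun i ↦ (hd i).ne']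
    _ = μ • diagonal (fun i ↦ ((d i)⁻¹ : 𝕜)) *ᵥ v := by rw [h, mulVec_smul]

theorem Matrix.norm_le_one_of_mulVec_eq_smul {K : Type*} [NormedField K] {B : Matrix n n K}
    (hB : ∀ j, ∑ i, ‖B i j‖ ≤ 1) {μ : K} {v : n → K} (hv : v ≠ 0)
    (h : B *ᵥ v = μ • v) : ‖μ‖ ≤ 1 := by
  have hS : 0 < ∑ i, ‖v i‖ := by
    obtain ⟨i, hi⟩ := Function.ne_iff.mp hv
    exact Finset.sum_pos' (fun j _ ↦ norm_nonneg _)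
      ⟨i, Finset.mem_univ _, norm_pos_iff.mpr hi⟩
  refine le_of_mul_le_mul_right ?_ hS
  calc ‖μ‖ * ∑ i, ‖v i‖ = ∑ i, ‖(B *ᵥ v) i‖ := by simp [h, Finset.mul_sum]
    _ ≤ ∑ i, ∑ j, ‖B i j‖ * ‖v j‖ := Finset.sum_le_sum fun i _ ↦
        (norm_sum_le _ fun j ↦ B i j * v j).trans_eq (by simp only [norm_mul])
    _ = ∑ j, (∑ i, ‖B i j‖) * ‖v j‖ := by rw [Finset.sum_comm]; simp [Finset.sum_mul]
    _ ≤ ∑ j, 1 * ‖v j‖ :=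
        Finset.sum_le_sum fun j _ ↦ mul_le_mul_of_nonneg_right (hB j) (norm_nonneg _)
    _ = 1 * ∑ j, ‖v j‖ := (Finset.mul_sum ..).symm

theorem Matrix.one_sub_mulVec_eq_smul_iff {R : Type*} [Ring R] [DecidableEq n] {M : Matrix n n R}
    {μ : R} {v : n → R} : (1 - M) *ᵥ v = μ • v ↔ M *ᵥ v = (1 - μ) • v := by
  rw [sub_mulVec, one_mulVec, sub_smul, one_smul, sub_eq_iff_eq_add, ← sub_eq_iff_eq_add',
    eq_comm]

theorem exists_mem_Ioc_of_diagonal_mul_mulVec_eq_smul [DecidableEq n] {q : n → ℝ}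
    (hq : ∀ k, 0 < q k) {A : Matrix n n ℝ} (hA : A.PosDef) (hAnn : ∀ k l, 0 ≤ A k l)
    (hcol : ∀ l, ∑ k, (diagonal q * A) k l ≤ 1) {μ : ℂ} {v : n → ℂ} (hv : v ≠ 0)
    (h : (diagonal q * A).map (↑) *ᵥ v = μ • v) : ∃ r ∈ Set.Ioc (0 : ℝ) 1, μ = r := by
  have hpos : 0 < μ := by
    rw [show ((↑) : ℝ → ℂ) = Complex.ofRealHom from rfl, Matrix.map_mul,
      diagonal_map (map_zero _)] at h
    exact hA.map_ofReal.pos_of_diagonal_mul_mulVec_eq_smul hq hv h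
  have hnorm : ‖μ‖ ≤ 1 := norm_le_one_of_mulVec_eq_smul (fun l ↦ ?_) hv h
  · obtain ⟨hre, him⟩ := Complex.pos_iff.mp hpos
    exact ⟨μ.re, ⟨hre, (Complex.re_le_norm μ).trans hnorm⟩, Complex.ext rfl him.symm⟩
  · simpa [diagonal_mul, abs_of_pos (hq _), abs_of_nonneg (hAnn _ _)] using hcol l

theorem eigenvalues_of_stable_iteration_general
    (K : ℕ)
    (q : Fin K → ℝ) (hq : ∀ k, 0 < q k)
    (A : Matrix (Fin K) (Fin K) ℝ)
    (hAsymm : A.IsSymm)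
    (hApos : ∀ s : Fin K → ℝ, s ≠ 0 → 0 < dotProduct s (A.mulVec s))
    (hAnn : ∀ k l, 0 ≤ A k l)
    (hcol : ∀ l, ∑ k, (Matrix.diagonal q * A) k l = 1) :
    (∀ (μ : ℂ) (v : Fin K → ℂ), v ≠ 0 →
        ((Matrix.diagonal q * A).map (Complex.ofReal)).mulVec v = μ • v →
        μ.im = 0 ∧ 0 < μ.re ∧ μ.re ≤ 1) ∧
    (∀ (μ : ℂ) (v : Fin K → ℂ), v ≠ 0 →
        (((1 : Matrix (Fin K) (Fin K) ℝ) - Matrix.diagonal q * A).map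
            (Complex.ofReal)).mulVec v = μ • v →
        μ.im = 0 ∧ 0 ≤ μ.re ∧ μ.re < 1 ∧ ‖μ‖ < 1) := by
  have hA : A.PosDef :=
    .of_dotProduct_mulVec_pos (isHermitian_iff_isSymm.mpr hAsymm) (by simpa using hApos)
  have hB {μ : ℂ} {v : Fin K → ℂ} (hv : v ≠ 0)
      (h : (diagonal q * A).map (↑) *ᵥ v = μ • v) : ∃ r ∈ Set.Ioc (0 : ℝ) 1, μ = r :=
    exists_mem_Ioc_of_diagonal_mul_mulVec_eq_smul hq hA hAnn (fun l ↦ (hcol l).le) hv h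
  refine ⟨fun μ v hv h ↦ ?_, fun μ v hv h ↦ ?_⟩
  · obtain ⟨r, ⟨hr0, hr1⟩, rfl⟩ := hB hv h
    simp [hr0, hr1]
  · rw [Matrix.map_sub _ Complex.ofReal_sub,
      Matrix.map_one _ Complex.ofReal_zero Complex.ofReal_one, one_sub_mulVec_eq_smul_iff] at h
    obtain ⟨r, ⟨hr0, hr1⟩, hr⟩ := hB hv h
    obtain rfl : μ = ↑(1 - r) := by push_cast; rw [← hr, sub_sub_cancel]
    rw [Complex.norm_real, Real.norm_eq_abs, abs_lt, Complex.ofReal_re]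
    exact ⟨Complex.ofReal_im _, by linarith, by linarith, by linarith, by linarith⟩

/-- Let `q ∈ ℝ^K` have positive entries and let `A` be symmetric
positive definite with nonnegative entries such that `B = diag(q)·A` has unit
column sums. Then every complex eigenvalue of `B` is real and lies in `(0, 1]`,
and every complex eigenvalue of `E_K − B` is real, lies in `[0, 1)`, and has
absolute value strictly less than 1. -/
theorem eigenvalues_of_stable_iteration
    (K : ℕ) (hK : 2 ≤ K)
    (q : Fin K → ℝ) (hq : ∀ k, 0 < q k)
    (A : Matrix (Fin K) (Fin K) ℝ)
    (hAsymm : A.IsSymm)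
    (hApos : ∀ s : Fin K → ℝ, s ≠ 0 → 0 < dotProduct s (A.mulVec s))
    (hAnn : ∀ k l, 0 ≤ A k l)
    (hcol : ∀ l, ∑ k, (Matrix.diagonal q * A) k l = 1) :
    (∀ (μ : ℂ) (v : Fin K → ℂ), v ≠ 0 →
        ((Matrix.diagonal q * A).map (Complex.ofReal)).mulVec v = μ • v →
        μ.im = 0 ∧ 0 < μ.re ∧ μ.re ≤ 1) ∧
    (∀ (μ : ℂ) (v : Fin K → ℂ), v ≠ 0 →
        (((1 : Matrix (Fin K) (Fin K) ℝ) - Matrix.diagonal q * A).map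
            (Complex.ofReal)).mulVec v = μ • v →
        μ.im = 0 ∧ 0 ≤ μ.re ∧ μ.re < 1 ∧ ‖μ‖ < 1) :=
  eigenvalues_of_stable_iteration_general K q hq A hAsymm hApos hAnn hcol
end
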